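/- Let a, b be integers with a ≥ 1 and 1 - a < b < 1 + a, b ≠ 0, and let k = (a + sqrt(a² + 4b))/2. Then the row lengths r_d of the k-descending tree satisfy the recurrence r_d = a·r_{d-1} + b·r_{d-2} for all d ≥ 2, with r_0 = 1 and r_1 = ceil(k) - 1. -/

import Mathlib

/-- Parent function of the `k`-descending tree. -/
noncomputable def par (k : ℝ) (n : ℕ) : ℕ := (⌊(n : ℝ) / k⌋).toNat

/-- Depth of a node: number of iterations of `m ↦ ⌊m / k⌋` needed to reach the root `0`. -/
noncomputable def depth (k : ℝ) (n : ℕ) : ℕ := sInf {d : ℕ | (par k)^[d] n = 0}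

/-- Number of nodes at depth `d` in the `k`-descending tree. -/
noncomputable def row (k : ℝ) (d : ℕ) : ℕ := {n : ℕ | depth k n = d}.ncard

/-- Auxiliary sequence: `tseq k d` is the least natural number of depth `> d`. -/
noncomputable def tseq (k : ℝ) : ℕ → ℕ
  | 0 => 1
  | d + 1 => ⌈k * tseq k d⌉₊

lemma tseq_zero (k : ℝ) : tseq k 0 = 1 := rfl

lemma tseq_succ (k : ℝ) (d : ℕ) : tseq k (d + 1) = ⌈k * tseq k d⌉₊ := rfl

section aux

variable {k : ℝ} (hk1 : 1 < k) (hirr : Irrational k)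

include hk1 in
lemma tseq_pos (d : ℕ) : 1 ≤ tseq k d := by
  induction d with
  | zero => simp [tseq_zero]
  | succ d ih =>
    have h0 : (0:ℝ) < k * tseq k d := by
      have h1 : (1:ℝ) ≤ (tseq k d : ℝ) := by exact_mod_cast ih
      nlinarith
    rw [tseq_succ, Nat.one_le_ceil_iff]
    exact h0

include hk1 hirr in
lemma tseq_lb (d : ℕ) : k * tseq k d < tseq k (d + 1) := by
  have h := tseq_pos hk1 (k := k) d
  have hI : Irrational (k * tseq k d) := hirr.mul_natCast (by omega)
  have hle : k * tseq k d ≤ ((⌈k * tseq k d⌉₊ : ℕ) : ℝ) := Nat.le_ceil _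
  have hne : k * tseq k d ≠ ((⌈k * tseq k d⌉₊ : ℕ) : ℝ) := hI.ne_nat _
  rw [tseq_succ]
  exact lt_of_le_of_ne hle hne

include hk1 in
lemma tseq_ub (d : ℕ) : (tseq k (d + 1) : ℝ) < k * tseq k d + 1 := by
  have h := tseq_pos hk1 (k := k) d
  have h1 : (1:ℝ) ≤ (tseq k d : ℝ) := by exact_mod_cast h
  have h0 : (0:ℝ) ≤ k * tseq k d := by nlinarith
  rw [tseq_succ]
  exact Nat.ceil_lt_add_one h0

include hk1 hirr in
lemma tseq_lt (d : ℕ) : tseq k d < tseq k (d + 1) := by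
  have h := tseq_pos hk1 (k := k) d
  have h1 : (tseq k d : ℝ) < k * tseq k d := by
    have : (1:ℝ) ≤ (tseq k d : ℝ) := by exact_mod_cast h
    nlinarith
  have := lt_trans h1 (tseq_lb hk1 hirr d)
  exact_mod_cast this

include hk1 hirr in
lemma tseq_mono : Monotone (tseq k) :=
  (strictMono_nat_of_lt_succ (tseq_lt hk1 hirr)).monotone

include hk1 hirr in
lemma lt_tseq (d : ℕ) : d < tseq k d := by
  induction d with
  | zero => simp [tseq_zero]
  | succ n ih => have := tseq_lt hk1 hirr n; omega

include hk1 hirr in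
lemma par_iter (d n : ℕ) : (par k)^[d] n = 0 ↔ n < tseq k d := by
  induction d generalizing n with
  | zero => simp [tseq_zero]
  | succ d ih =>
    rw [Function.iterate_succ_apply, ih]
    have hpos := tseq_pos hk1 (k := k) d
    have hk0 : (0:ℝ) < k := lt_trans one_pos hk1
    rw [tseq_succ]
    constructor
    · intro h
      rw [par, Int.toNat_lt' (by omega)] at h
      rw [Int.floor_lt] at h
      have h2 : (n:ℝ) < k * tseq k d := by
        rw [div_lt_iff₀ hk0] at h
        push_cast at h ⊢
        linarith
      exact Nat.lt_ceil.2 h2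
    · intro h
      have hn : (n:ℝ) < k * tseq k d := Nat.lt_ceil.1 h
      rw [par, Int.toNat_lt' (by omega), Int.floor_lt]
      rw [div_lt_iff₀ hk0]
      push_cast
      linarith

include hk1 hirr in
lemma depth_nonempty (n : ℕ) : {d : ℕ | (par k)^[d] n = 0}.Nonempty :=
  ⟨n, (par_iter hk1 hirr n n).2 (lt_tseq hk1 hirr n)⟩

include hk1 hirr in
lemma depth_succ_iff (n d : ℕ) :
    depth k n = d + 1 ↔ tseq k d ≤ n ∧ n < tseq k (d + 1) := by
  constructor
  · intro h
    have hmem := Nat.sInf_mem (depth_nonempty hk1 hirr n)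
    rw [show sInf {d : ℕ | (par k)^[d] n = 0} = depth k n from rfl, h] at hmem
    have h2 : n < tseq k (d + 1) := (par_iter hk1 hirr (d + 1) n).1 hmem
    have h1 : d ∉ {d : ℕ | (par k)^[d] n = 0} := by
      apply Nat.notMem_of_lt_sInf
      rw [show sInf {d : ℕ | (par k)^[d] n = 0} = depth k n from rfl, h]
      omega
    rw [Set.mem_setOf_eq, par_iter hk1 hirr] at h1
    exact ⟨by omega, h2⟩
  · rintro ⟨h1, h2⟩
    have hmem : d + 1 ∈ {d : ℕ | (par k)^[d] n = 0} := (par_iter hk1 hirr (d + 1) n).2 h2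
    have hle : depth k n ≤ d + 1 := Nat.sInf_le hmem
    have hge : d + 1 ≤ depth k n := by
      by_contra hcon
      push_neg at hcon
      have hmem' := Nat.sInf_mem (depth_nonempty hk1 hirr n)
      have hdd : n < tseq k (depth k n) := (par_iter hk1 hirr _ n).1 hmem'
      have : tseq k (depth k n) ≤ tseq k d := tseq_mono hk1 hirr (by omega)
      omega
    omega

include hk1 hirr in
lemma row_succ (d : ℕ) : row k (d + 1) = tseq k (d + 1) - tseq k d := by
  have hset : {n : ℕ | depth k n = d + 1} = ↑(Finset.Ico (tseq k d) (tseq k (d + 1))) := by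
    ext n
    simp [depth_succ_iff hk1 hirr]
  rw [row, hset, Set.ncard_coe_finset, Nat.card_Ico]

include hk1 hirr in
lemma row_zero : row k 0 = 1 := by
  have hset : {n : ℕ | depth k n = 0} = {0} := by
    ext n
    simp only [Set.mem_setOf_eq, Set.mem_singleton_iff]
    constructor
    · intro h
      have hmem := Nat.sInf_mem (depth_nonempty hk1 hirr n)
      rw [show sInf {d : ℕ | (par k)^[d] n = 0} = depth k n from rfl, h] at hmem
      simpa using hmem
    · rintro rfl
      have h0 : 0 ∈ {d : ℕ | (par k)^[d] 0 = 0} := by simp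
      have h1 : depth k 0 ≤ 0 := Nat.sInf_le h0
      omega
  rw [row, hset, Set.ncard_singleton]

end aux

set_option maxHeartbeats 1000000 in
/-- For `a, b ∈ ℤ` with `a ≥ 1`, `1 - a < b < 1 + a`, `b ≠ 0`, and
`k = (a + √(a² + 4b))/2`, the row lengths satisfy `r_d = a·r_{d-1} + b·r_{d-2}` for `d ≥ 2`,
with `r_0 = 1` and `r_1 = ⌈k⌉ - 1`. -/
theorem stmt_10 (a b : ℤ) (ha : 1 ≤ a) (hb1 : 1 - a < b) (hb2 : b < 1 + a) (hb0 : b ≠ 0)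
    (k : ℝ) (hk : k = ((a : ℝ) + Real.sqrt ((a : ℝ) ^ 2 + 4 * b)) / 2) :
    (row k 0 : ℤ) = 1 ∧ (row k 1 : ℤ) = ⌈k⌉ - 1 ∧
      ∀ d : ℕ, 2 ≤ d → (row k d : ℤ) = a * row k (d - 1) + b * row k (d - 2) := by
  -- basic integer facts
  have hb2a : b ≥ 2 - a := by omega
  have hba : b ≤ a := by omega
  -- real facts about k
  have hb2aR : (2:ℝ) - (a:ℝ) ≤ (b:ℝ) := by
    have h : ((2 - a : ℤ) : ℝ) ≤ (b : ℝ) := by exact_mod_cast hb2a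
    push_cast at h; linarith
  have hD : (0:ℝ) ≤ (a : ℝ) ^ 2 + 4 * b := by
    nlinarith [sq_nonneg ((a:ℝ) - 2)]
  have hs := Real.sq_sqrt hD
  have hs0 := Real.sqrt_nonneg ((a : ℝ) ^ 2 + 4 * b)
  set s := Real.sqrt ((a : ℝ) ^ 2 + 4 * b) with hsdef
  have hkk : k ^ 2 = a * k + b := by rw [hk]; nlinarith [hs]
  have haR : (1:ℝ) ≤ (a:ℝ) := by exact_mod_cast ha
  have hbaR : (b:ℝ) ≤ (a:ℝ) := by exact_mod_cast hba
  -- s^2 ≥ (a-2)^2 + 4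
  have hs4 : ((a:ℝ) - 2) ^ 2 + 4 ≤ s ^ 2 := by rw [hs]; nlinarith
  have hk1 : 1 < k := by
    rw [hk]
    have h1 : 2 - (a:ℝ) < s := by
      nlinarith [sq_nonneg (s + (a:ℝ) - 2), sq_nonneg (s - (a:ℝ) + 2)]
    linarith
  have hk0 : (0:ℝ) < k := lt_trans one_pos hk1
  have hka1 : (a:ℝ) - 1 < k := by
    rw [hk]
    have h1 : (a:ℝ) - 2 < s := by
      nlinarith [sq_nonneg (s + (a:ℝ) - 2), sq_nonneg (s - (a:ℝ) + 2)]
    linarith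
  have hka2 : k < (a:ℝ) + 1 := by nlinarith [hkk]
  -- irrationality of k
  have hirr : Irrational k := by
    rintro ⟨q, hq⟩
    have hq2 : (q:ℚ) ^ 2 = (a:ℚ) * q + b := by
      have h : (q:ℝ) ^ 2 = (a:ℝ) * q + b := by rw [hq]; exact hkk
      exact_mod_cast h
    have hd0 : ((q.den : ℤ) : ℚ) ≠ 0 := by simp [q.den_nz]
    have hnd : (q.num : ℚ) = q * (q.den : ℚ) := by
      have h := Rat.num_div_den q
      rwa [div_eq_iff (by exact_mod_cast q.den_nz : ((q.den : ℕ) : ℚ) ≠ 0)] at h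
    have key : q.num ^ 2 = a * q.num * q.den + b * (q.den : ℤ) ^ 2 := by
      have h : (q.num : ℚ) ^ 2 =
          (a:ℚ) * (q.num : ℚ) * (q.den : ℚ) + (b:ℚ) * ((q.den : ℕ) : ℚ) ^ 2 := by
        rw [hnd]
        linear_combination ((q.den : ℕ) : ℚ) ^ 2 * hq2
      exact_mod_cast h
    have hdvd : (q.den : ℤ) ∣ q.num ^ 2 := ⟨a * q.num + b * q.den, by linear_combination key⟩
    have hdvdN : q.den ∣ q.num.natAbs ^ 2 := by
      have h := Int.natAbs_dvd_natAbs.mpr hdvd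
      simpa [Int.natAbs_pow] using h
    have hcop : Nat.Coprime q.den (q.num.natAbs ^ 2) := (Nat.Coprime.pow_left 2 q.reduced).symm
    have hden1 : q.den = 1 := hcop.eq_one_of_dvd hdvdN
    have hqn : (q:ℚ) = (q.num : ℚ) := (Rat.coe_int_num_of_den_eq_one hden1).symm
    have hkn : k = ((q.num : ℤ) : ℝ) := by rw [← hq]; exact_mod_cast hqn
    have h1 : (a:ℝ) - 1 < ((q.num : ℤ) : ℝ) := hkn ▸ hka1
    have h2 : ((q.num : ℤ) : ℝ) < (a:ℝ) + 1 := hkn ▸ hka2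
    have h1' : a - 1 < q.num := by exact_mod_cast h1
    have h2' : q.num < a + 1 := by exact_mod_cast h2
    have hna : q.num = a := by omega
    have hbz : (b:ℝ) = 0 := by
      have h := hkk
      rw [hkn, hna] at h
      push_cast at h
      linear_combination -h
    exact hb0 (by exact_mod_cast hbz)
  -- sign facts
  have hak : 0 < b → (a:ℝ) < k := by
    intro hbpos
    have hbR : (1:ℝ) ≤ (b:ℝ) := by exact_mod_cast hbpos
    nlinarith [hkk]
  have hak' : b < 0 → k < (a:ℝ) := by
    intro hbneg
    have hb1' : b ≤ -1 := by omega
    have hbR : (b:ℝ) ≤ -1 := by exact_mod_cast hb1'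
    nlinarith [hkk]
  -- the constant c and the key recurrences
  obtain ⟨c, hceil, hT1⟩ :
      ∃ c : ℤ, (∀ θ : ℝ, 0 < θ → θ < 1 → ⌈(k - a) * θ⌉ = c) ∧ ((tseq k 1 : ℤ) = a + c) := by
    have hck : (tseq k 1 : ℤ) = ⌈k⌉ := by
      rw [tseq_succ, tseq_zero]
      rw [show ((1:ℕ):ℝ) = (1:ℝ) by norm_num, mul_one]
      exact Int.natCast_ceil_eq_ceil (le_of_lt hk0)
    rcases lt_or_gt_of_ne hb0 with hbneg | hbpos
    · refine ⟨0, ?_, ?_⟩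
      · intro θ h0 h1
        have hka : k < (a:ℝ) := hak' hbneg
        have hka' : (a:ℝ) - k < 1 := by linarith [hka1]
        rw [Int.ceil_eq_iff]
        constructor
        · push_cast; nlinarith
        · push_cast; nlinarith
      · rw [hck, add_zero]
        rw [Int.ceil_eq_iff]
        constructor
        · push_cast; linarith [hka1]
        · push_cast; linarith [hak' hbneg]
    · refine ⟨1, ?_, ?_⟩
      · intro θ h0 h1
        have hka : (a:ℝ) < k := hak hbpos
        have hka' : k - (a:ℝ) < 1 := by linarith [hka2]
        rw [Int.ceil_eq_iff]
        constructor
        · push_cast; nlinarith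
        · push_cast; nlinarith
      · rw [hck]
        rw [Int.ceil_eq_iff]
        constructor
        · push_cast; linarith [hak hbpos]
        · push_cast; linarith [hka2]
  -- recurrence for tseq
  have hTrec : ∀ d : ℕ,
      (tseq k (d + 2) : ℤ) = a * tseq k (d + 1) + b * tseq k d + c := by
    intro d
    have hpos1 := tseq_pos hk1 (k := k) (d + 1)
    have hθ0 : 0 < (tseq k (d + 1) : ℝ) - k * tseq k d := by
      have := tseq_lb hk1 hirr d; linarith
    have hθ1 : (tseq k (d + 1) : ℝ) - k * tseq k d < 1 := by
      have := tseq_ub hk1 d; linarith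
    have hiden : k * (tseq k (d + 1) : ℝ) =
        (k - a) * ((tseq k (d + 1) : ℝ) - k * tseq k d)
          + (((a * tseq k (d + 1) + b * tseq k d : ℤ) : ℤ) : ℝ) := by
      push_cast
      nlinarith [hkk]
    have hnn : (0:ℝ) ≤ k * (tseq k (d + 1) : ℝ) := by positivity
    have hc1 : (tseq k (d + 2) : ℤ) = ⌈k * (tseq k (d + 1) : ℝ)⌉ := by
      rw [show d + 2 = (d + 1) + 1 from rfl, tseq_succ]
      exact Int.natCast_ceil_eq_ceil hnn
    rw [hc1, hiden, Int.ceil_add_intCast,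
      hceil _ hθ0 hθ1]
    push_cast
    ring
  -- rows in terms of tseq
  have hrow0 : (row k 0 : ℤ) = 1 := by rw [row_zero hk1 hirr]; norm_num
  have hrowS : ∀ d : ℕ, (row k (d + 1) : ℤ) = (tseq k (d + 1) : ℤ) - tseq k d := by
    intro d
    rw [row_succ hk1 hirr d]
    have hle : tseq k d ≤ tseq k (d + 1) := le_of_lt (tseq_lt hk1 hirr d)
    push_cast [Nat.cast_sub hle]
    ring
  have hceilk : (tseq k 1 : ℤ) = ⌈k⌉ := by
    rw [tseq_succ, tseq_zero]
    rw [show ((1:ℕ):ℝ) = (1:ℝ) by norm_num, mul_one]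
    exact Int.natCast_ceil_eq_ceil (le_of_lt hk0)
  have hT0 : (tseq k 0 : ℤ) = 1 := by rw [tseq_zero]; norm_num
  refine ⟨hrow0, ?_, ?_⟩
  · rw [hrowS 0, hceilk, hT0]
  · intro d hd
    obtain ⟨e, rfl⟩ : ∃ e, d = e + 2 := ⟨d - 2, by omega⟩
    rcases Nat.eq_zero_or_pos e with rfl | he
    · simp only [show (0:ℕ) + 2 - 1 = 1 from rfl, show (0:ℕ) + 2 - 2 = 0 from rfl]
      rw [show (0:ℕ) + 2 = 1 + 1 from rfl, hrowS 1, hrowS 0, hrow0]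
      have h := hTrec 0
      rw [show (1:ℕ) + 1 = 0 + 2 from rfl, h, hT0, hT1]
      ring
    · obtain ⟨f, rfl⟩ : ∃ f, e = f + 1 := ⟨e - 1, by omega⟩
      have h1 : f + 1 + 2 - 1 = f + 2 := by omega
      have h2 : f + 1 + 2 - 2 = f + 1 := by omega
      rw [h1, h2]
      rw [show f + 1 + 2 = (f + 2) + 1 from rfl, hrowS (f + 2),
        show f + 2 = (f + 1) + 1 from rfl, hrowS (f + 1), hrowS f]
      have hA := hTrec (f + 1)
      have hB := hTrec f
      rw [show f + 1 + 2 = (f + 2) + 1 from rfl] at hA ⊢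
      rw [show (f + 1) + 1 = f + 2 from rfl] at hA hB ⊢
      linarith [hA, hB]
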